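/- arXiv:1107.4904 — 2 statements merged into one kernel-verified Lean document; each statement's English description precedes it below -/
import Mathlib

section
/- The function G_{n,n}(t) = ∫₀^t ds₁ ⋯ ∫_{s_{n−1}}^t ds_n ∏_{j=1}^{n+1} cosh c(s_j − s_{j−1}) (with s₀ = 0, s_{n+1} = t) satisfies G_{n,n}''(t) = G_{n−1,n−1}'(t) + c² G_{n,n}(t) for n ≥ 1. -/
/-!
`G c (m+1) (m+1)` is the convolution on `[0, t]` of `cosh (c ·)` with `G c m m`. The addition
formula `cosh (c (t - u)) = cosh (c t) cosh (c u) - sinh (c t) sinh (c u)` moves the whole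
`t`-dependence of such a convolution `F` outside two integrals with variable upper limit, which the
fundamental theorem of calculus differentiates. In `F'` the boundary terms collapse to `g t` by
`cosh² - sinh² = 1`; differentiating once more, they cancel and the rest reproduces `c² F`, so
`F'' = g' + c² F`.
-/
open Real MeasureTheory intervalIntegral

/-- `G c n k t` is the iterated integral
`∫₀ᵗ ds₁ ⋯ ∫_{s_{k-1}}ᵗ ds_k ((t-s_k)^{n-k}/(n-k)!) ∏_{j=1}^k cosh c(s_j-s_{j-1}) · cosh c(t-s_k)`
(with `s₀ = 0`), written through its convolution recursion. -/
noncomputable def G (c : ℝ) : ℕ → ℕ → ℝ → ℝ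
  | n, 0, t => t ^ n / n.factorial * Real.cosh (c * t)
  | n, k + 1, t => ∫ s in (0:ℝ)..t, Real.cosh (c * s) * G c (n - 1) k (t - s)

noncomputable def coshConv (c : ℝ) (g : ℝ → ℝ) (t : ℝ) : ℝ :=
  ∫ s in (0:ℝ)..t, cosh (c * s) * g (t - s)

theorem hasDerivAt_cosh_mul (c t : ℝ) :
    HasDerivAt (fun t => cosh (c * t)) (c * sinh (c * t)) t := by
  simpa [mul_comm] using ((hasDerivAt_id t).const_mul c).cosh

theorem hasDerivAt_sinh_mul (c t : ℝ) :
    HasDerivAt (fun t => sinh (c * t)) (c * cosh (c * t)) t := by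
  simpa [mul_comm] using ((hasDerivAt_id t).const_mul c).sinh

section CoshConv

variable {c : ℝ} {g : ℝ → ℝ}

theorem coshConv_eq (hg : Continuous g) (t : ℝ) :
    coshConv c g t = cosh (c * t) * (∫ u in (0:ℝ)..t, cosh (c * u) * g u)
      - sinh (c * t) * ∫ u in (0:ℝ)..t, sinh (c * u) * g u := by
  have hcosh : Continuous fun u => cosh (c * u) * g u := by fun_prop
  have hsinh : Continuous fun u => sinh (c * u) * g u := by fun_prop
  have hflip : coshConv c g t = ∫ u in (0:ℝ)..t, cosh (c * (t - u)) * g u := by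
    simpa [coshConv] using
      integral_comp_sub_left (fun u => cosh (c * (t - u)) * g u) t (a := 0) (b := t)
  rw [hflip, ← intervalIntegral.integral_const_mul, ← intervalIntegral.integral_const_mul,
    ← integral_sub ((hcosh.const_mul _).intervalIntegrable _ _)
      ((hsinh.const_mul _).intervalIntegrable _ _)]
  congr 1 with u
  rw [mul_sub, cosh_sub]
  ring

theorem hasDerivAt_coshConv (hg : Continuous g) (t : ℝ) :
    HasDerivAt (coshConv c g)
      (c * sinh (c * t) * (∫ u in (0:ℝ)..t, cosh (c * u) * g u)
        - c * cosh (c * t) * (∫ u in (0:ℝ)..t, sinh (c * u) * g u) + g t) t := by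
  have hA := ((show Continuous fun u => cosh (c * u) * g u by fun_prop).integral_hasStrictDerivAt
    0 t).hasDerivAt
  have hB := ((show Continuous fun u => sinh (c * u) * g u by fun_prop).integral_hasStrictDerivAt
    0 t).hasDerivAt
  rw [show coshConv c g = _ from funext (coshConv_eq hg)]
  refine (((hasDerivAt_cosh_mul c t).mul hA).sub
    ((hasDerivAt_sinh_mul c t).mul hB)).congr_deriv ?_
  linear_combination g t * Real.cosh_sq_sub_sinh_sq (c * t)

theorem deriv_deriv_coshConv (hg : Differentiable ℝ g) (t : ℝ) :
    deriv (deriv (coshConv c g)) t = deriv g t + c ^ 2 * coshConv c g t := by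
  have hgc := hg.continuous
  have hA := ((show Continuous fun u => cosh (c * u) * g u by fun_prop).integral_hasStrictDerivAt
    0 t).hasDerivAt
  have hB := ((show Continuous fun u => sinh (c * u) * g u by fun_prop).integral_hasStrictDerivAt
    0 t).hasDerivAt
  rw [show deriv (coshConv c g) = _ from funext fun t => (hasDerivAt_coshConv hgc t).deriv,
    coshConv_eq hgc]
  refine (((((hasDerivAt_sinh_mul c t).const_mul c).mul hA).sub
    (((hasDerivAt_cosh_mul c t).const_mul c).mul hB)).add (hg t).hasDerivAt).deriv.trans ?_
  ring

end CoshConv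

theorem G_succ_diag (c : ℝ) (m : ℕ) : G c (m + 1) (m + 1) = coshConv c (G c m m) := rfl

theorem differentiable_G_diag (c : ℝ) : ∀ m, Differentiable ℝ (G c m m)
  | 0 => by
    simpa [G] using show Differentiable ℝ fun t => cosh (c * t) from
      fun t => (hasDerivAt_cosh_mul c t).differentiableAt
  | m + 1 => by
    rw [G_succ_diag]
    exact fun t => (hasDerivAt_coshConv (differentiable_G_diag c m).continuous t).differentiableAt

theorem G_diag_ode_general (c : ℝ) (n : ℕ) (hn : 1 ≤ n) (t : ℝ) :
    deriv (deriv (G c n n)) t = deriv (G c (n - 1) (n - 1)) t + c ^ 2 * G c n n t := by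
  obtain ⟨m, rfl⟩ : ∃ m, n = m + 1 := ⟨n - 1, by omega⟩
  rw [Nat.add_sub_cancel, G_succ_diag]
  exact deriv_deriv_coshConv (differentiable_G_diag c m) t

theorem G_diag_ode (c : ℝ) (n : ℕ) (hc : 0 < c) (hn : 1 ≤ n) (t : ℝ) :
    deriv (deriv (G c n n)) t = deriv (G c (n - 1) (n - 1)) t + c ^ 2 * G c n n t :=
  G_diag_ode_general c n hn t
end

section
/- For λ, c > 0 with λ > c, and each natural number k ≥ 1, the function f_k with Laplace transform [λ(λ+μ)/((λ+μ)² − c²)]^k (in the variable μ) is given by f_k(s) = (λ^k/2^k) Σ_{r=0}^{k} C(k,r) g_r(s), where g_0(s) = (s^{k−1}/(k−1)!) e^{−s(λ+c)}, g_k(s) = (s^{k−1}/(k−1)!) e^{s(c−λ)}, and for 1 ≤ r ≤ k−1, g_r(s) = ∫₀^s (w^{r−1}/(r−1)!) e^{w(c−λ)} ((s−w)^{k−r−1}/(k−r−1)!) e^{−(s−w)(λ+c)} dw; i.e., ∫₀^∞ e^{−μs} f_k(s) ds = [λ(λ+μ)/((λ+μ)² − c²)]^k for all μ > c. -/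
/-!
Put `A = μ + l - c` and `B = μ + l + c`. The kernel `s ^ n / n! * exp (b * s)` has Laplace
transform `(μ - b)⁻¹ ^ (n + 1)` at `μ > b` (a Gamma integral), and for `0 < r < k` the term `g_r`
is the convolution on `(0, ∞)` of two such kernels, so its transform is the product of theirs.
Hence `g_r` transforms to `A⁻¹ ^ r * B⁻¹ ^ (k - r)` for every `r ≤ k`, the binomial theorem sums
the terms to `(l / 2) ^ k * (A⁻¹ + B⁻¹) ^ k`, and `(l / 2) * (A⁻¹ + B⁻¹) = l (l + μ) / (A B)` with
`A B = (l + μ) ^ 2 - c ^ 2`.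
-/

open Real MeasureTheory Set Finset

noncomputable section

def laplace (f : ℝ → ℝ) (μ : ℝ) : ℝ := ∫ s in Ioi 0, exp (-μ * s) * f s

def LaplaceIntegrable (f : ℝ → ℝ) (μ : ℝ) : Prop :=
  IntegrableOn (fun s => exp (-μ * s) * f s) (Ioi 0)

section Laplace

variable {f g : ℝ → ℝ} {μ : ℝ}

lemma LaplaceIntegrable.const_mul (hf : LaplaceIntegrable f μ) (a : ℝ) :
    LaplaceIntegrable (fun s => a * f s) μ := by
  simpa only [LaplaceIntegrable, IntegrableOn, mul_left_comm _ a] using Integrable.const_mul hf a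

lemma laplace_const_mul (a : ℝ) (f : ℝ → ℝ) (μ : ℝ) :
    laplace (fun s => a * f s) μ = a * laplace f μ := by
  simp only [laplace, mul_left_comm _ a, integral_const_mul]

lemma laplace_finset_sum {ι : Type*} (t : Finset ι) {f : ι → ℝ → ℝ}
    (hf : ∀ i ∈ t, LaplaceIntegrable (f i) μ) :
    laplace (fun s => ∑ i ∈ t, f i s) μ = ∑ i ∈ t, laplace (f i) μ := by
  simp only [laplace, Finset.mul_sum]
  exact integral_finsetSum t hf

/-- `posConvolution` without the indicator of `(0, ∞)`. -/
def posConv (f g : ℝ → ℝ) (s : ℝ) : ℝ := ∫ w in 0..s, f w * g (s - w)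

lemma exp_neg_mul_mul_posConv (f g : ℝ → ℝ) (μ s : ℝ) :
    exp (-μ * s) * posConv f g s =
      posConv (fun w => exp (-μ * w) * f w) (fun w => exp (-μ * w) * g w) s := by
  rw [posConv, posConv, ← intervalIntegral.integral_const_mul]
  refine intervalIntegral.integral_congr fun w _ => ?_
  rw [show -μ * s = -μ * w + -μ * (s - w) by ring, exp_add]
  ring

lemma LaplaceIntegrable.posConv (hf : LaplaceIntegrable f μ) (hg : LaplaceIntegrable g μ) :
    LaplaceIntegrable (posConv f g) μ := by
  have h := integrable_posConvolution hf hg (ContinuousLinearMap.mul ℝ ℝ)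
  rw [posConvolution, integrable_indicator_iff measurableSet_Ioi] at h
  simp only [ContinuousLinearMap.mul_apply'] at h
  simp only [LaplaceIntegrable, exp_neg_mul_mul_posConv]
  exact h

lemma laplace_posConv (hf : LaplaceIntegrable f μ) (hg : LaplaceIntegrable g μ) :
    laplace (posConv f g) μ = laplace f μ * laplace g μ := by
  simp only [laplace, exp_neg_mul_mul_posConv]
  exact integral_posConvolution hf hg (ContinuousLinearMap.mul ℝ ℝ)

end Laplace

section GammaKernel

lemma integrableOn_pow_mul_exp_neg_mul {a : ℝ} (ha : 0 < a) (n : ℕ) :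
    IntegrableOn (fun x : ℝ => x ^ n * exp (-(a * x))) (Ioi 0) := by
  refine (integrableOn_rpow_mul_exp_neg_mul_rpow (s := n) (p := 1)
    (by linarith [n.cast_nonneg (α := ℝ)]) one_pos ha).congr_fun (fun x _ => ?_) measurableSet_Ioi
  simp only [rpow_natCast, rpow_one, neg_mul]

lemma integral_pow_mul_exp_neg_mul_Ioi {a : ℝ} (ha : 0 < a) (n : ℕ) :
    ∫ x in Ioi 0, x ^ n * exp (-(a * x)) = n.factorial / a ^ (n + 1) := by
  have h := integral_rpow_mul_exp_neg_mul_Ioi (a := (n + 1 : ℕ)) (by positivity) ha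
  simp only [Nat.cast_add_one, add_sub_cancel_right, rpow_natCast, Gamma_nat_eq_factorial] at h
  rw [h, ← Nat.cast_add_one, rpow_natCast, one_div_pow, one_div_mul_eq_div]

def gammaKernel (n : ℕ) (b s : ℝ) : ℝ := s ^ n / n.factorial * exp (b * s)

lemma exp_neg_mul_mul_gammaKernel (μ b : ℝ) (n : ℕ) (s : ℝ) :
    exp (-μ * s) * gammaKernel n b s =
      (n.factorial : ℝ)⁻¹ * (s ^ n * exp (-((μ - b) * s))) := by
  rw [gammaKernel, show -((μ - b) * s) = -μ * s + b * s by ring, exp_add]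
  ring

variable {μ b : ℝ}

lemma laplaceIntegrable_gammaKernel (h : b < μ) (n : ℕ) :
    LaplaceIntegrable (gammaKernel n b) μ := by
  simpa only [LaplaceIntegrable, IntegrableOn, exp_neg_mul_mul_gammaKernel] using
    (integrableOn_pow_mul_exp_neg_mul (sub_pos.2 h) n).const_mul _

lemma laplace_gammaKernel (h : b < μ) (n : ℕ) :
    laplace (gammaKernel n b) μ = ((μ - b) ^ (n + 1))⁻¹ := by
  simp only [laplace, exp_neg_mul_mul_gammaKernel, integral_const_mul,
    integral_pow_mul_exp_neg_mul_Ioi (sub_pos.2 h)]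
  field_simp

end GammaKernel

/-- The paper's `g_r`. -/
def splinterSummand (l c : ℝ) (k r : ℕ) (s : ℝ) : ℝ :=
  if r = 0 then
    s ^ (k - 1) / (k - 1).factorial * Real.exp (-s * (l + c))
  else if r = k then
    s ^ (k - 1) / (k - 1).factorial * Real.exp (s * (c - l))
  else
    ∫ w in (0:ℝ)..s,
      w ^ (r - 1) / (r - 1).factorial * Real.exp (w * (c - l)) *
        ((s - w) ^ (k - r - 1) / (k - r - 1).factorial) *
        Real.exp (-(s - w) * (l + c))

section SplinterSummand

variable {l c μ : ℝ} {k r : ℕ}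

lemma splinterSummand_zero :
    splinterSummand l c k 0 = gammaKernel (k - 1) (-(l + c)) := by
  ext s
  simp only [splinterSummand, if_pos, gammaKernel, neg_mul, mul_comm s]

lemma splinterSummand_self (hk : k ≠ 0) :
    splinterSummand l c k k = gammaKernel (k - 1) (c - l) := by
  ext s
  simp only [splinterSummand, if_neg hk, if_true, gammaKernel, mul_comm s]

lemma splinterSummand_of_ne (h0 : r ≠ 0) (hk : r ≠ k) :
    splinterSummand l c k r =
      posConv (gammaKernel (r - 1) (c - l)) (gammaKernel (k - r - 1) (-(l + c))) := by
  ext s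
  simp only [splinterSummand, if_neg h0, if_neg hk, posConv, gammaKernel]
  refine intervalIntegral.integral_congr fun w _ => ?_
  ring_nf

lemma laplaceIntegrable_splinterSummand (ha : c - l < μ) (hb : -(l + c) < μ) (k r : ℕ) :
    LaplaceIntegrable (splinterSummand l c k r) μ := by
  rcases eq_or_ne r 0 with rfl | h0
  · rw [splinterSummand_zero]
    exact laplaceIntegrable_gammaKernel hb _
  rcases eq_or_ne r k with rfl | hk
  · rw [splinterSummand_self h0]
    exact laplaceIntegrable_gammaKernel ha _
  rw [splinterSummand_of_ne h0 hk]
  exact (laplaceIntegrable_gammaKernel ha _).posConv (laplaceIntegrable_gammaKernel hb _)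

lemma laplace_splinterSummand (ha : c - l < μ) (hb : -(l + c) < μ) (hk : k ≠ 0) (hr : r ≤ k) :
    laplace (splinterSummand l c k r) μ =
      ((μ + l - c) ^ r)⁻¹ * ((μ + l + c) ^ (k - r))⁻¹ := by
  rcases eq_or_ne r 0 with rfl | h0
  · rw [splinterSummand_zero, laplace_gammaKernel hb, Nat.sub_add_cancel (by omega)]
    simp only [pow_zero, inv_one, one_mul, Nat.sub_zero]
    ring
  rcases eq_or_ne r k with rfl | hrk
  · rw [splinterSummand_self h0, laplace_gammaKernel ha, Nat.sub_add_cancel (by omega)]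
    simp only [Nat.sub_self, pow_zero, inv_one, mul_one]
    ring
  rw [splinterSummand_of_ne h0 hrk, laplace_posConv (laplaceIntegrable_gammaKernel ha _)
    (laplaceIntegrable_gammaKernel hb _), laplace_gammaKernel ha, laplace_gammaKernel hb,
    Nat.sub_add_cancel (by omega), Nat.sub_add_cancel (by omega)]
  ring

end SplinterSummand

end

theorem laplace_transform_fk (l c : ℝ) (hc : 0 < c) (hl : c < l) (k : ℕ) (hk : 1 ≤ k) :
    ∀ μ : ℝ, c < μ →
      ∫ s in Set.Ioi (0:ℝ),
          Real.exp (-μ * s) *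
            ((l ^ k / 2 ^ k) *
              ∑ r ∈ Finset.range (k + 1),
                (k.choose r : ℝ) *
                  (if r = 0 then
                      s ^ (k - 1) / (k - 1).factorial * Real.exp (-s * (l + c))
                    else if r = k then
                      s ^ (k - 1) / (k - 1).factorial * Real.exp (s * (c - l))
                    else
                      ∫ w in (0:ℝ)..s,
                        w ^ (r - 1) / (r - 1).factorial * Real.exp (w * (c - l)) *
                          ((s - w) ^ (k - r - 1) / (k - r - 1).factorial) *
                          Real.exp (-(s - w) * (l + c)))) =
        (l * (l + μ) / ((l + μ) ^ 2 - c ^ 2)) ^ k := by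
  intro μ hμ
  have ha : c - l < μ := by linarith
  have hb : -(l + c) < μ := by linarith
  change laplace (fun s => l ^ k / 2 ^ k *
    ∑ r ∈ range (k + 1), (k.choose r : ℝ) * splinterSummand l c k r s) μ = _
  have hterm : ∀ r ∈ range (k + 1),
      LaplaceIntegrable (fun s => (k.choose r : ℝ) * splinterSummand l c k r s) μ :=
    fun r _ => (laplaceIntegrable_splinterSummand ha hb k r).const_mul _
  have hk0 : k ≠ 0 := by omega
  have hA : μ + l - c ≠ 0 := by linarith
  have hB : μ + l + c ≠ 0 := by linarith
  rw [laplace_const_mul, laplace_finset_sum _ hterm]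
  calc l ^ k / 2 ^ k * ∑ r ∈ range (k + 1),
        laplace (fun s => (k.choose r : ℝ) * splinterSummand l c k r s) μ
      = l ^ k / 2 ^ k * ∑ r ∈ range (k + 1),
          (μ + l - c)⁻¹ ^ r * (μ + l + c)⁻¹ ^ (k - r) * k.choose r := by
        refine congrArg _ (sum_congr rfl fun r hr => ?_)
        rw [laplace_const_mul, laplace_splinterSummand ha hb hk0 
          (Nat.lt_succ_iff.1 (mem_range.1 hr))]
        ring
    _ = (l / 2 * ((μ + l - c)⁻¹ + (μ + l + c)⁻¹)) ^ k := by rw [mul_pow, add_pow, div_pow]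
    _ = (l * (l + μ) / ((l + μ) ^ 2 - c ^ 2)) ^ k := by
        congr 1
        rw [show (l + μ) ^ 2 - c ^ 2 = (μ + l - c) * (μ + l + c) by ring]
        field_simp
        ring
end
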